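/- If an irrational number ω ∈ (0,1) belongs to KL⁺(T,N) for some T > 0 and N ∈ ℕ, then there exists C > 0 such that ω is (C,τ)-Diophantine with τ = 1 + (κ + T)/log φ, where φ = (1+√5)/2 is the golden ratio. -/

import Mathlib

open Set

noncomputable section

/-- The Gauss map `G(x) = 1/x - ⌊1/x⌋`. -/
def gaussMap (x : ℝ) : ℝ := 1 / x - (⌊1 / x⌋ : ℝ)

/-- The `n`-th partial quotient `a_n(ω) = ⌊1 / G^{n-1}(ω)⌋` (for `n ≥ 1`). -/
def pq (ω : ℝ) (n : ℕ) : ℤ := ⌊1 / (gaussMap^[n - 1] ω)⌋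

/-- `M_n(ω) = a_1(ω) ⋯ a_n(ω)`. -/
def Mprod (ω : ℝ) (n : ℕ) : ℝ := ∏ j ∈ Finset.Icc 1 n, (pq ω j : ℝ)

/-- Khintchine's constant exponent `κ`. -/
def kappa : ℝ := ∫ x in Ioo (0 : ℝ) 1, Real.log (⌊1 / x⌋ : ℝ) / ((1 + x) * Real.log 2)

/-- `ω` is `(C,τ)`-Diophantine: `|qω − p| ≥ C/q^τ` for all integers `p` and positive integers
`q`. -/
def IsDiophantine (C τ ω : ℝ) : Prop :=
  ∀ p q : ℤ, 0 < q → C / (q : ℝ) ^ τ ≤ |(q : ℝ) * ω - (p : ℝ)|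

end

/-! Every `q ≥ 1` lies in some `[qₙ, qₙ₊₁)`, where `pₙ / qₙ` are the convergents of `ω`. By the
best-approximation property of convergents and the determinant identity,
`|q ω - p| ≥ |qₙ ω - pₙ| ≥ 1 / (qₙ₊₁ + qₙ) ≥ 1 / (3 aₙ₊₁ q)`.
The KL⁺ bound gives `aₙ₊₁ ≤ Mₘ ≤ e^{(κ+T)(N+2)} e^{(κ+T)(n-1)}` with `m = max (n+1) N`, and
Fibonacci growth `qₙ ≥ φⁿ⁻¹` turns `e^{(κ+T)(n-1)}` into at most `q^{(κ+T)/log φ}`. -/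

open Real

theorem irrational_gaussMap {x : ℝ} (hx : Irrational x) : Irrational (gaussMap x) := by
  rw [gaussMap, one_div]
  exact hx.inv.sub_intCast _

theorem gaussMap_mem_Ioo {x : ℝ} (hx : Irrational x) : gaussMap x ∈ Ioo (0 : ℝ) 1 := by
  have hfract : gaussMap x = Int.fract (1 / x) := rfl
  refine ⟨?_, hfract ▸ Int.fract_lt_one _⟩
  exact (hfract ▸ Int.fract_nonneg _).lt_of_ne fun h ↦
    (irrational_gaussMap hx).ne_int 0 (by simp [← h])

theorem pq_succ_add_iterate_gaussMap (ω : ℝ) (n : ℕ) :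
    (pq ω (n + 1) : ℝ) + gaussMap^[n + 1] ω = 1 / gaussMap^[n] ω := by
  rw [Function.iterate_succ_apply', gaussMap, pq, Nat.add_sub_cancel]
  ring

section Iterates

variable {ω : ℝ}

theorem irrational_iterate_gaussMap (hω : Irrational ω) (n : ℕ) :
    Irrational (gaussMap^[n] ω) := by
  induction n with
  | zero => exact hω
  | succ n ih => rw [Function.iterate_succ_apply']; exact irrational_gaussMap ih

theorem iterate_gaussMap_mem_Ioo (hω : Irrational ω) (hmem : ω ∈ Ioo (0 : ℝ) 1) (n : ℕ) :
    gaussMap^[n] ω ∈ Ioo (0 : ℝ) 1 := by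
  cases n with
  | zero => exact hmem
  | succ n =>
    rw [Function.iterate_succ_apply']
    exact gaussMap_mem_Ioo (irrational_iterate_gaussMap hω n)

theorem one_le_pq (hω : Irrational ω) (hmem : ω ∈ Ioo (0 : ℝ) 1) (n : ℕ) : 1 ≤ pq ω n := by
  obtain ⟨hpos, hlt⟩ := iterate_gaussMap_mem_Ioo hω hmem (n - 1)
  exact Int.le_floor.2 (by exact_mod_cast one_le_one_div hpos hlt.le)

theorem one_le_Mprod (hω : Irrational ω) (hmem : ω ∈ Ioo (0 : ℝ) 1) (n : ℕ) : 1 ≤ Mprod ω n :=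
  Finset.one_le_prod fun j _ ↦ by exact_mod_cast one_le_pq hω hmem j

theorem pq_le_Mprod (hω : Irrational ω) (hmem : ω ∈ Ioo (0 : ℝ) 1) {j n : ℕ}
    (hj : j ∈ Finset.Icc 1 n) : (pq ω j : ℝ) ≤ Mprod ω n := by
  have hle := Finset.prod_le_prod_of_subset_of_one_le (f := fun i ↦ (pq ω i : ℝ))
    (Finset.singleton_subset_iff.2 hj)
    (fun i _ ↦ by exact_mod_cast zero_le_one.trans (one_le_pq hω hmem i))
    (fun i _ _ ↦ by exact_mod_cast one_le_pq hω hmem i)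
  simpa [Mprod] using hle

end Iterates

/-- Write `(q, p) = x (Q₀, P₀) + y (Q₁, P₁)` with `x, y ∈ ℤ`; then `0 < q < Q₁` forces `x ≠ 0` and
`x y ≤ 0`, so the two terms of `q ω - p = x (Q₀ ω - P₀) + y (Q₁ ω - P₁)` cannot cancel. -/
theorem abs_mul_sub_le_of_det_sq_eq_one {P₀ Q₀ P₁ Q₁ p q : ℤ} {ω : ℝ}
    (hdet : (P₁ * Q₀ - P₀ * Q₁) ^ 2 = 1) (hQ₀ : 0 ≤ Q₀) (hq : 0 < q) (hqQ₁ : q < Q₁)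
    (hsign : ((Q₀ : ℝ) * ω - P₀) * ((Q₁ : ℝ) * ω - P₁) ≤ 0) :
    |(Q₀ : ℝ) * ω - P₀| ≤ |(q : ℝ) * ω - p| := by
  set d := P₁ * Q₀ - P₀ * Q₁
  set x := d * (P₁ * q - Q₁ * p)
  set y := d * (Q₀ * p - P₀ * q)
  have hq_eq : x * Q₀ + y * Q₁ = q := by linear_combination q * hdet
  have hp_eq : x * P₀ + y * P₁ = p := by linear_combination p * hdet
  have hx : x ≠ 0 := by
    rintro hx
    rw [hx, zero_mul, zero_add] at hq_eq
    rcases le_or_gt y 0 with hy | hy <;> nlinarith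
  have hxy : x * y ≤ 0 := by
    by_contra! hxy
    rcases pos_and_pos_or_neg_and_neg_of_mul_pos hxy with ⟨hx, hy⟩ | ⟨hx, hy⟩ <;> nlinarith
  have hsplit : (q : ℝ) * ω - p = x * ((Q₀ : ℝ) * ω - P₀) + y * ((Q₁ : ℝ) * ω - P₁) := by
    rw [← hq_eq, ← hp_eq]
    push_cast
    ring
  have hsame : 0 ≤ x * ((Q₀ : ℝ) * ω - P₀) * (y * ((Q₁ : ℝ) * ω - P₁)) := by
    have hxy' : (x : ℝ) * y ≤ 0 := by exact_mod_cast hxy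
    nlinarith
  have hx1 : (1 : ℝ) ≤ |(x : ℝ)| := by exact_mod_cast Int.one_le_abs hx
  rw [hsplit, (abs_add_eq_add_abs_iff _ _).2 (mul_nonneg_iff.1 hsame), abs_mul, abs_mul]
  nlinarith [abs_nonneg ((Q₀ : ℝ) * ω - P₀), abs_nonneg (y : ℝ),
    abs_nonneg ((Q₁ : ℝ) * ω - P₁)]

/-- `cfNum ω n / cfDen ω n = pₙ / qₙ = [0; a₁, …, aₙ]`, the `n`-th convergent of `ω`. -/
noncomputable def cfNum (ω : ℝ) : ℕ → ℤ
  | 0 => 0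
  | 1 => 1
  | n + 2 => pq ω (n + 2) * cfNum ω (n + 1) + cfNum ω n

noncomputable def cfDen (ω : ℝ) : ℕ → ℤ
  | 0 => 1
  | 1 => pq ω 1
  | n + 2 => pq ω (n + 2) * cfDen ω (n + 1) + cfDen ω n

theorem cfNum_succ_mul_cfDen_sub (ω : ℝ) (n : ℕ) :
    cfNum ω (n + 1) * cfDen ω n - cfNum ω n * cfDen ω (n + 1) = (-1) ^ n := by
  induction n with
  | zero => simp [cfNum, cfDen]
  | succ n ih =>
    rw [cfNum, cfDen, pow_succ]
    linear_combination -ih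

section Convergents

variable {ω : ℝ}

theorem cfDen_succ_mul_sub_cfNum_succ (hω : Irrational ω) (n : ℕ) :
    (cfDen ω (n + 1) : ℝ) * ω - cfNum ω (n + 1) =
      -gaussMap^[n + 1] ω * ((cfDen ω n : ℝ) * ω - cfNum ω n) := by
  induction n with
  | zero =>
    have h := pq_succ_add_iterate_gaussMap ω 0
    rw [Function.iterate_zero_apply] at h
    simp only [cfDen, cfNum, Int.cast_one, Int.cast_zero, zero_add]
    field_simp [hω.ne_zero] at h ⊢
    linear_combination h
  | succ n ih =>
    have h := pq_succ_add_iterate_gaussMap ω (n + 1)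
    have hx := (irrational_iterate_gaussMap hω (n + 1)).ne_zero
    field_simp at h
    simp only [cfDen, cfNum, Int.cast_add, Int.cast_mul]
    linear_combination
      -((cfDen ω n : ℝ) * ω - cfNum ω n) * h + (pq ω (n + 2) + gaussMap^[n + 2] ω) * ih

theorem cfDen_pos (hω : Irrational ω) (hmem : ω ∈ Ioo (0 : ℝ) 1) : ∀ n, 0 < cfDen ω n
  | 0 => one_pos
  | 1 => one_le_pq hω hmem 1
  | n + 2 => by
    have := one_le_pq hω hmem (n + 2)
    have := cfDen_pos hω hmem n
    have := cfDen_pos hω hmem (n + 1)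
    rw [cfDen]; nlinarith

theorem cfDen_le_succ (hω : Irrational ω) (hmem : ω ∈ Ioo (0 : ℝ) 1) :
    ∀ n, cfDen ω n ≤ cfDen ω (n + 1)
  | 0 => one_le_pq hω hmem 1
  | n + 1 => by
    have := one_le_pq hω hmem (n + 2)
    have := cfDen_pos hω hmem n
    have := cfDen_pos hω hmem (n + 1)
    rw [cfDen]; nlinarith

theorem cfDen_add_le (hω : Irrational ω) (hmem : ω ∈ Ioo (0 : ℝ) 1) (n : ℕ) :
    cfDen ω (n + 1) + cfDen ω n ≤ cfDen ω (n + 2) := by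
  have := one_le_pq hω hmem (n + 2)
  have := cfDen_pos hω hmem (n + 1)
  rw [cfDen]; nlinarith

theorem cfDen_succ_le (hω : Irrational ω) (hmem : ω ∈ Ioo (0 : ℝ) 1) :
    ∀ n, cfDen ω (n + 1) ≤ (pq ω (n + 1) + 1) * cfDen ω n
  | 0 => by simp [cfDen]
  | n + 1 => by
    have := cfDen_le_succ hω hmem n
    rw [cfDen]; linarith

open scoped goldenRatio in
theorem goldenRatio_pow_le_cfDen_succ (hω : Irrational ω) (hmem : ω ∈ Ioo (0 : ℝ) 1) :
    ∀ n, φ ^ n ≤ cfDen ω (n + 1)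
  | 0 => by simpa [cfDen] using (Int.cast_le (R := ℝ)).2 (one_le_pq hω hmem 1)
  | 1 => by
    have h2 : 2 ≤ cfDen ω 2 := by
      have h : cfDen ω 1 + cfDen ω 0 ≤ cfDen ω 2 := cfDen_add_le hω hmem 0
      have h0 : cfDen ω 0 = 1 := rfl
      linarith [cfDen_pos hω hmem 1]
    rw [pow_one]
    exact goldenRatio_lt_two.le.trans (by exact_mod_cast h2)
  | n + 2 => by
    have h := (Int.cast_le (R := ℝ)).2 (cfDen_add_le hω hmem (n + 1))
    push_cast at h
    linarith [goldenRatio_pow_sub_goldenRatio_pow n, goldenRatio_pow_le_cfDen_succ hω hmem n,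
      goldenRatio_pow_le_cfDen_succ hω hmem (n + 1)]

open scoped goldenRatio in
theorem goldenRatio_pow_le_cfDen (hω : Irrational ω) (hmem : ω ∈ Ioo (0 : ℝ) 1) (n : ℕ) :
    φ ^ (n - 1) ≤ cfDen ω n := by
  cases n with
  | zero => simp [cfDen]
  | succ n => exact goldenRatio_pow_le_cfDen_succ hω hmem n

theorem one_le_cfDen_add_mul_abs (hω : Irrational ω) (hmem : ω ∈ Ioo (0 : ℝ) 1) (n : ℕ) :
    1 ≤ ((cfDen ω (n + 1) : ℝ) + cfDen ω n) * |(cfDen ω n : ℝ) * ω - cfNum ω n| := by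
  set e₀ := (cfDen ω n : ℝ) * ω - cfNum ω n
  set e₁ := (cfDen ω (n + 1) : ℝ) * ω - cfNum ω (n + 1)
  have hdet : (cfDen ω (n + 1) : ℝ) * e₀ - cfDen ω n * e₁ = (-1) ^ n := by
    have := congrArg (Int.cast : ℤ → ℝ) (cfNum_succ_mul_cfDen_sub ω n)
    push_cast at this
    linear_combination this
  have he : |e₁| ≤ |e₀| := by
    rw [show e₁ = _ from cfDen_succ_mul_sub_cfNum_succ hω n, abs_mul, abs_neg]
    obtain ⟨hpos, hlt⟩ := iterate_gaussMap_mem_Ioo hω hmem (n + 1)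
    exact mul_le_of_le_one_left (abs_nonneg _) ((abs_of_pos hpos).trans_le hlt.le)
  have hq₁ : (0 : ℝ) ≤ cfDen ω (n + 1) := by exact_mod_cast (cfDen_pos hω hmem (n + 1)).le
  have hq₀ : (0 : ℝ) ≤ cfDen ω n := by exact_mod_cast (cfDen_pos hω hmem n).le
  calc (1 : ℝ) = |(cfDen ω (n + 1) : ℝ) * e₀ - cfDen ω n * e₁| := by simp [hdet]
    _ ≤ cfDen ω (n + 1) * |e₀| + cfDen ω n * |e₁| :=
      (abs_sub _ _).trans_eq (by rw [abs_mul, abs_mul, abs_of_nonneg hq₀, abs_of_nonneg hq₁])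
    _ ≤ _ := by nlinarith

theorem exists_cfDen_le_lt (hω : Irrational ω) (hmem : ω ∈ Ioo (0 : ℝ) 1) {q : ℤ} (hq : 0 < q) :
    ∃ n, cfDen ω n ≤ q ∧ q < cfDen ω (n + 1) := by
  classical
  have hex : ∃ n, q < cfDen ω (n + 1) := by
    obtain ⟨n, hn⟩ := pow_unbounded_of_one_lt (q : ℝ) one_lt_goldenRatio
    exact ⟨n, by exact_mod_cast hn.trans_le (goldenRatio_pow_le_cfDen_succ hω hmem n)⟩
  refine ⟨Nat.find hex, ?_, Nat.find_spec hex⟩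
  rcases Nat.eq_zero_or_eq_succ_pred (Nat.find hex) with h | h
  · rw [h]; exact hq
  · rw [h]; exact not_lt.1 (Nat.find_min hex (h ▸ Nat.pred_lt_self (by omega)))

theorem abs_cfDen_mul_sub_cfNum_le (hω : Irrational ω) (hmem : ω ∈ Ioo (0 : ℝ) 1) {p q : ℤ}
    {n : ℕ} (hq : 0 < q) (hqn : q < cfDen ω (n + 1)) :
    |(cfDen ω n : ℝ) * ω - cfNum ω n| ≤ |(q : ℝ) * ω - p| := by
  have hdet : (cfNum ω (n + 1) * cfDen ω n - cfNum ω n * cfDen ω (n + 1)) ^ 2 = 1 := by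
    rw [cfNum_succ_mul_cfDen_sub, ← pow_mul, mul_comm, pow_mul]
    norm_num
  refine abs_mul_sub_le_of_det_sq_eq_one hdet (cfDen_pos hω hmem n).le hq hqn ?_
  rw [cfDen_succ_mul_sub_cfNum_succ hω n]
  nlinarith [(iterate_gaussMap_mem_Ioo hω hmem (n + 1)).1,
    mul_self_nonneg ((cfDen ω n : ℝ) * ω - cfNum ω n)]

theorem isDiophantine_of_pq_succ_le (hω : Irrational ω) (hmem : ω ∈ Ioo (0 : ℝ) 1) {E s : ℝ}
    (hs : 0 ≤ s) (hpq : ∀ n, (pq ω (n + 1) : ℝ) ≤ E * (cfDen ω n : ℝ) ^ s) :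
    IsDiophantine (1 / (3 * E)) (1 + s) ω := by
  intro p q hq
  obtain ⟨n, hqn, hqn'⟩ := exists_cfDen_le_lt hω hmem hq
  have hq₀ : (0 : ℝ) < q := by exact_mod_cast hq
  have hqn₀ : (0 : ℝ) < cfDen ω n := by exact_mod_cast cfDen_pos hω hmem n
  have hqnq : (cfDen ω n : ℝ) ≤ q := by exact_mod_cast hqn
  have ha : (1 : ℝ) ≤ pq ω (n + 1) := by exact_mod_cast one_le_pq hω hmem (n + 1)
  have hE : 0 < E := by
    have h := hpq 0
    have h₁ : (1 : ℝ) ≤ pq ω 1 := by exact_mod_cast one_le_pq hω hmem 1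
    simp only [cfDen, Int.cast_one, one_rpow, mul_one] at h
    linarith
  have hden : (cfDen ω (n + 1) : ℝ) + cfDen ω n ≤ 3 * pq ω (n + 1) * q := by
    have := (Int.cast_le (R := ℝ)).2 (cfDen_succ_le hω hmem n)
    push_cast at this
    nlinarith
  have ha_le : (pq ω (n + 1) : ℝ) ≤ E * (q : ℝ) ^ s :=
    (hpq n).trans (by gcongr)
  have key : 1 ≤ 3 * E * (q : ℝ) ^ (1 + s) * |(q : ℝ) * ω - p| :=
    calc 1 ≤ ((cfDen ω (n + 1) : ℝ) + cfDen ω n) * |(cfDen ω n : ℝ) * ω - cfNum ω n| :=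
          one_le_cfDen_add_mul_abs hω hmem n
      _ ≤ 3 * pq ω (n + 1) * q * |(q : ℝ) * ω - p| :=
          mul_le_mul hden (abs_cfDen_mul_sub_cfNum_le hω hmem hq hqn') (abs_nonneg _)
            (by positivity)
      _ ≤ 3 * (E * (q : ℝ) ^ s) * q * |(q : ℝ) * ω - p| := by gcongr
      _ = 3 * E * (q : ℝ) ^ (1 + s) * |(q : ℝ) * ω - p| := by
          rw [rpow_add hq₀, rpow_one]; ring
  rw [div_div, div_le_iff₀ (by positivity)]
  linarith

end Convergents

section Growth

variable {ω c : ℝ} {N : ℕ}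

theorem nonneg_of_Mprod_le_exp (hω : Irrational ω) (hmem : ω ∈ Ioo (0 : ℝ) 1)
    (hM : ∀ n : ℕ, N ≤ n → Mprod ω n ≤ exp (c * n)) : 0 ≤ c := by
  have h := (one_le_Mprod hω hmem (N + 1)).trans (hM (N + 1) N.le_succ)
  exact nonneg_of_mul_nonneg_left (one_le_exp_iff.1 h) (by positivity)

theorem pq_succ_le_exp_of_Mprod_le (hω : Irrational ω) (hmem : ω ∈ Ioo (0 : ℝ) 1) (hc : 0 ≤ c)
    (hM : ∀ n : ℕ, N ≤ n → Mprod ω n ≤ exp (c * n)) (n : ℕ) :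
    (pq ω (n + 1) : ℝ) ≤ exp (c * (N + 2)) * exp (c * (n - 1 : ℕ)) := by
  set m := max (n + 1) N
  have hm : (m : ℝ) ≤ N + 2 + (n - 1 : ℕ) := by
    exact_mod_cast (show m ≤ N + 2 + (n - 1) by omega)
  calc (pq ω (n + 1) : ℝ) ≤ Mprod ω m :=
        pq_le_Mprod hω hmem (Finset.mem_Icc.2 ⟨by omega, le_max_left _ _⟩)
    _ ≤ exp (c * m) := hM m (le_max_right _ _)
    _ ≤ exp (c * (N + 2 + (n - 1 : ℕ))) := by gcongr
    _ = exp (c * (N + 2)) * exp (c * (n - 1 : ℕ)) := by rw [mul_add, exp_add]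

open scoped goldenRatio in
theorem exp_le_cfDen_rpow (hω : Irrational ω) (hmem : ω ∈ Ioo (0 : ℝ) 1) (hc : 0 ≤ c)
    (n : ℕ) : exp (c * (n - 1 : ℕ)) ≤ (cfDen ω n : ℝ) ^ (c / log φ) := by
  have hlog : 0 < log φ := log_pos one_lt_goldenRatio
  calc exp (c * (n - 1 : ℕ)) = (φ ^ (n - 1)) ^ (c / log φ) := by
        rw [← rpow_natCast, ← rpow_mul goldenRatio_pos.le, rpow_def_of_pos goldenRatio_pos]
        congr 1
        field_simp
    _ ≤ (cfDen ω n : ℝ) ^ (c / log φ) := by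
        gcongr
        exact goldenRatio_pow_le_cfDen hω hmem n

end Growth

theorem KL_plus_imp_diophantine_general (ω T : ℝ) (N : ℕ) (hω : Irrational ω)
    (hmem : ω ∈ Ioo (0 : ℝ) 1)
    (hKL : ∀ n : ℕ, N ≤ n → Mprod ω n ≤ Real.exp ((kappa + T) * n)) :
    ∃ C : ℝ, 0 < C ∧
      IsDiophantine C (1 + (kappa + T) / Real.log ((1 + Real.sqrt 5) / 2)) ω := by
  have hc : 0 ≤ kappa + T := nonneg_of_Mprod_le_exp hω hmem hKL
  refine ⟨1 / (3 * exp ((kappa + T) * (N + 2))), by positivity, ?_⟩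
  refine isDiophantine_of_pq_succ_le hω hmem (div_nonneg hc (log_pos one_lt_goldenRatio).le)
    fun n ↦ ?_
  calc (pq ω (n + 1) : ℝ)
      ≤ exp ((kappa + T) * (N + 2)) * exp ((kappa + T) * (n - 1 : ℕ)) :=
        pq_succ_le_exp_of_Mprod_le hω hmem hc hKL n
    _ ≤ exp ((kappa + T) * (N + 2)) * (cfDen ω n : ℝ) ^ ((kappa + T) / log goldenRatio) := by
        gcongr
        exact exp_le_cfDen_rpow hω hmem hc n

theorem KL_plus_imp_diophantine (ω T : ℝ) (N : ℕ) (hω : Irrational ω)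
    (hmem : ω ∈ Ioo (0 : ℝ) 1) (hT : 0 < T)
    (hKL : ∀ n : ℕ, N ≤ n → Mprod ω n ≤ Real.exp ((kappa + T) * n)) :
    ∃ C : ℝ, 0 < C ∧
      IsDiophantine C (1 + (kappa + T) / Real.log ((1 + Real.sqrt 5) / 2)) ω :=
  KL_plus_imp_diophantine_general ω T N hω hmem hKL
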